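/- arXiv:2401.17577 — 2 statements merged into one kernel-verified Lean document; each statement's English description precedes it below -/
import Mathlib

section
/- Let p and q be probability measures on a measurable space Ω with q absolutely continuous with respect to p and KL(q‖p) < ∞, and let l : Ω → ℝ be (σ,c)-sub-Gamma under p and q-integrable. Then E_q[l] − E_p[l] ≤ σ √(2 KL(q‖p)) + c · KL(q‖p). -/
open MeasureTheory Real ENNReal
open scoped Classical

/-- The Kullback–Leibler divergence `KL(q‖p)`, equal to `∫ log (dq/dp) dq` when `q` is
absolutely continuous with respect to `p` (and the integral is well defined),
and `+∞` otherwise. -/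
noncomputable def klDiv {Ω : Type*} [MeasurableSpace Ω] (q p : Measure Ω) : ℝ≥0∞ :=
  if q ≪ p ∧ Integrable (llr q p) q then ENNReal.ofReal (∫ x, llr q p x ∂q) else ⊤

/-- A function `l : Ω → ℝ` is `(σ,c)`-sub-Gamma under a probability measure `p`, with
`σ > 0` and `c > 0`, if it is `p`-integrable and for all `0 < λ < 1/c`,
`log E_p[exp (λ (l − E_p[l]))] ≤ λ²σ²/(2(1 − cλ))` (the moment generating function being
well defined). -/
def IsSubGamma {Ω : Type*} [MeasurableSpace Ω] (p : Measure Ω) (σ c : ℝ) (l : Ω → ℝ) :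
    Prop :=
  0 < σ ∧ 0 < c ∧ Integrable l p ∧ ∀ lam : ℝ, 0 < lam → lam < 1 / c →
    Integrable (fun x => Real.exp (lam * (l x - ∫ y, l y ∂p))) p ∧
    Real.log (∫ x, Real.exp (lam * (l x - ∫ y, l y ∂p)) ∂p) ≤
      lam ^ 2 * σ ^ 2 / (2 * (1 - c * lam))

/-! The change-of-measure (Donsker–Varadhan) inequality `λ (E_q[l] − E_p[l]) ≤ KL(q‖p) + ψ(λ)`,
where `ψ(λ) = λ²σ²/(2(1 − cλ))` bounds the centred log-moment generating function of `l` under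
`p`, comes from Gibbs' inequality `KL(q‖p_λ) ≥ 0` for the exponentially tilted measure
`p_λ ∝ exp (λ l) p`. It remains to optimise over `0 < λ < 1/c`: the choice
`λ = t / (σ + c t)` turns the bound into `σ (k / t + t / 2) + c k` with `k = KL(q‖p)`, which
tends to `σ √(2k) + c k` as `t → √(2k)`. -/

section ChangeOfMeasure

variable {Ω : Type*} [MeasurableSpace Ω] {μ ν : Measure Ω}

lemma klDiv_eq_informationTheory_klDiv [IsProbabilityMeasure μ] [IsProbabilityMeasure ν] :
    klDiv μ ν = InformationTheory.klDiv μ ν := by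
  by_cases h : μ ≪ ν ∧ Integrable (llr μ ν) μ
  · simp [klDiv, InformationTheory.klDiv_of_ac_of_integrable h.1 h.2, h]
  · rw [klDiv, if_neg h, eq_comm, InformationTheory.klDiv_eq_top_iff]
    exact fun hac hint => h ⟨hac, hint⟩

lemma integral_llr_nonneg [IsProbabilityMeasure μ] [IsProbabilityMeasure ν] (hμν : μ ≪ ν)
    (h_int : Integrable (llr μ ν) μ) : 0 ≤ ∫ x, llr μ ν x ∂μ := by
  simpa using InformationTheory.integral_llr_add_sub_measure_univ_nonneg hμν h_int

lemma integral_le_integral_llr_add_log_integral_exp [IsProbabilityMeasure μ] [SigmaFinite ν]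
    [NeZero ν] {f : Ω → ℝ} (hμν : μ ≪ ν) (h_int : Integrable (llr μ ν) μ)
    (hfμ : Integrable f μ) (hfν : Integrable (fun x => exp (f x)) ν) :
    ∫ x, f x ∂μ ≤ ∫ x, llr μ ν x ∂μ + log (∫ x, exp (f x) ∂ν) := by
  have := isProbabilityMeasure_tilted hfν
  have h_gibbs : 0 ≤ ∫ x, llr μ (ν.tilted f) x ∂μ :=
    integral_llr_nonneg (hμν.trans (absolutelyContinuous_tilted hfν))
      (integrable_llr_tilted_right hμν hfμ h_int hfν)
  rw [integral_llr_tilted_right hμν hfμ hfν h_int] at h_gibbs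
  linarith

end ChangeOfMeasure

lemma le_of_forall_mul_le_add_sq_div {σ c k Δ : ℝ} (hσ : 0 < σ) (hc : 0 < c) (hk : 0 ≤ k)
    (h : ∀ lam, 0 < lam → lam < 1 / c → lam * Δ ≤ k + lam ^ 2 * σ ^ 2 / (2 * (1 - c * lam))) :
    Δ ≤ σ * √(2 * k) + c * k := by
  set s := √(2 * k)
  have hs : 0 ≤ s := sqrt_nonneg _
  have hs2 : s ^ 2 = 2 * k := sq_sqrt (by linarith)
  have h_param : ∀ t > 0, Δ ≤ σ * (k / t + t / 2) + c * k := by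
    intro t ht
    have hD : 0 < σ + c * t := by positivity
    have h1 : 1 - c * (t / (σ + c * t)) = σ / (σ + c * t) := by field_simp; ring
    have hlam : t / (σ + c * t) < 1 / c := by
      rw [div_lt_div_iff₀ hD hc]
      nlinarith
    have hb := h _ (by positivity) hlam
    rw [h1] at hb
    rw [← mul_le_mul_iff_of_pos_left (show 0 < t / (σ + c * t) by positivity)]
    refine hb.trans_eq ?_
    field_simp
    ring
  refine le_of_forall_pos_le_add fun ε hε => ?_
  set δ := 2 * ε / σ
  have hδ : 0 < δ := by positivity
  have hopt : k / (s + δ) + (s + δ) / 2 ≤ s + δ / 2 := by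
    rw [div_add_div _ _ (by positivity) two_ne_zero, div_le_iff₀ (by positivity)]
    nlinarith [mul_nonneg hs hδ.le]
  calc Δ ≤ σ * (k / (s + δ) + (s + δ) / 2) + c * k := h_param _ (by positivity)
    _ ≤ σ * (s + δ / 2) + c * k := by gcongr
    _ = σ * s + c * k + ε := by simp only [δ]; field_simp; ring

theorem integral_sub_le_of_subGamma_general {Ω : Type*} [MeasurableSpace Ω]
    (p q : Measure Ω) [IsProbabilityMeasure p] [IsProbabilityMeasure q]
    (σ c : ℝ) (l : Ω → ℝ) (hfin : klDiv q p ≠ ⊤)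
    (hsg : IsSubGamma p σ c l) (hlq : Integrable l q) :
    ∫ x, l x ∂q - ∫ x, l x ∂p ≤
      σ * Real.sqrt (2 * (klDiv q p).toReal) + c * (klDiv q p).toReal := by
  obtain ⟨hσ, hc, -, hmgf⟩ := hsg
  rw [klDiv_eq_informationTheory_klDiv] at hfin ⊢
  obtain ⟨hac, h_int⟩ := InformationTheory.klDiv_ne_top_iff.mp hfin
  rw [InformationTheory.toReal_klDiv_of_measure_eq hac (by simp)]
  refine le_of_forall_mul_le_add_sq_div hσ hc (integral_llr_nonneg hac h_int) fun lam hl0 hl1 => ?_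
  obtain ⟨h_exp, h_log⟩ := hmgf lam hl0 hl1
  have h_lin : ∫ x, lam * (l x - ∫ y, l y ∂p) ∂q = lam * (∫ x, l x ∂q - ∫ x, l x ∂p) := by
    simp [integral_const_mul, integral_sub hlq (integrable_const _)]
  have h_dv := integral_le_integral_llr_add_log_integral_exp
    (f := fun x => lam * (l x - ∫ y, l y ∂p)) hac h_int
    ((hlq.sub (integrable_const _)).const_mul lam) h_exp
  linarith

/-- If `q ≪ p` are probability measures with `KL(q‖p) < ∞`, and `l` is `(σ,c)`-sub-Gamma
under `p` and `q`-integrable, then `E_q[l] − E_p[l] ≤ σ √(2 KL(q‖p)) + c · KL(q‖p)`. -/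
theorem integral_sub_le_of_subGamma {Ω : Type*} [MeasurableSpace Ω]
    (p q : Measure Ω) [IsProbabilityMeasure p] [IsProbabilityMeasure q]
    (σ c : ℝ) (l : Ω → ℝ) (hac : q ≪ p) (hfin : klDiv q p ≠ ⊤)
    (hsg : IsSubGamma p σ c l) (hlq : Integrable l q) :
    ∫ x, l x ∂q - ∫ x, l x ∂p ≤
      σ * Real.sqrt (2 * (klDiv q p).toReal) + c * (klDiv q p).toReal :=
  integral_sub_le_of_subGamma_general p q σ c l hfin hsg hlq
end

section
/- Let (S, 𝒮, μ) be a probability space, (Ω, ℱ) a measurable space, p a probability measure on Ω, and s ↦ q_s a Markov kernel from S to Ω. Suppose the loss l : Ω → ℝ is (σ,c)-sub-Gamma under p, is q_s-integrable for μ-almost every s, that each q_s is absolutely continuous with respect to p, that s ↦ KL(q_s‖p) is μ-integrable, and that s ↦ E_{q_s}[l] is μ-integrable. Then ∫_S (E_{q_s}[l] − E_p[l]) dμ(s) ≤ σ √(2 ∫_S KL(q_s‖p) dμ(s)) + c ∫_S KL(q_s‖p) dμ(s). -/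
open MeasureTheory Real ENNReal ProbabilityTheory
open scoped Classical

/-! For every `λ ∈ (0, 1/c)`, the Donsker–Varadhan inequality applied to `λ (l − E_p[l])`
gives `λ (E_{κ s}[l] − E_p[l]) ≤ KL(κ s‖p) + ψ(λ)`, where `ψ(λ) = λ²σ²/(2(1 − cλ))` bounds
the centred log-moment generating function. Integrating in `s` yields `λ D ≤ K + ψ(λ)` for
the expected discrepancy `D` and the mutual information `K`, and the choice
`λ = r / (σ + c r)` with `r = √(2K)` turns this into `D ≤ σ r + c K`. -/

section DonskerVaradhan

variable {Ω : Type*} [MeasurableSpace Ω] {q p : Measure Ω} [IsProbabilityMeasure q]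
  [IsProbabilityMeasure p]

lemma integral_llr_nonneg_s6 (hqp : q ≪ p) (hllr : Integrable (llr q p) q) :
    0 ≤ ∫ x, llr q p x ∂q := by
  simpa using InformationTheory.integral_llr_add_sub_measure_univ_nonneg hqp hllr

/-- Donsker–Varadhan: Gibbs' inequality for `q` against the tilted measure `p.tilted f`. -/
lemma integral_le_integral_llr_add_log_integral_exp_s6 (hqp : q ≪ p)
    (hllr : Integrable (llr q p) q) {f : Ω → ℝ} (hfq : Integrable f q)
    (hfp : Integrable (fun x ↦ exp (f x)) p) :
    ∫ x, f x ∂q ≤ ∫ x, llr q p x ∂q + log (∫ x, exp (f x) ∂p) := by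
  have : IsProbabilityMeasure (p.tilted f) := isProbabilityMeasure_tilted hfp
  have hgibbs := integral_llr_nonneg_s6 (hqp.trans (absolutelyContinuous_tilted hfp))
    (integrable_llr_tilted_right hqp hfq hllr hfp)
  rw [integral_llr_tilted_right hqp hfq hfp hllr] at hgibbs
  linarith

lemma ofReal_integral_sub_log_integral_exp_le_klDiv {f : Ω → ℝ} (hfq : Integrable f q)
    (hfp : Integrable (fun x ↦ exp (f x)) p) :
    ENNReal.ofReal (∫ x, f x ∂q - log (∫ x, exp (f x) ∂p)) ≤ klDiv q p := by
  unfold klDiv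
  split_ifs with h
  · exact ENNReal.ofReal_le_ofReal <| by
      linarith [integral_le_integral_llr_add_log_integral_exp_s6 h.1 h.2 hfq hfp]
  · exact le_top

end DonskerVaradhan

lemma integral_le_toReal_lintegral {α : Type*} [MeasurableSpace α] {μ : Measure α}
    {g : α → ℝ} {f : α → ℝ≥0∞} (hf : ∫⁻ a, f a ∂μ ≠ ⊤)
    (hgf : ∀ᵐ a ∂μ, ENNReal.ofReal (g a) ≤ f a) :
    ∫ a, g a ∂μ ≤ (∫⁻ a, f a ∂μ).toReal := by
  by_cases hg : Integrable g μ
  · calc ∫ a, g a ∂μ ≤ (∫⁻ a, ENNReal.ofReal (g a) ∂μ).toReal := by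
          rw [integral_eq_lintegral_pos_part_sub_lintegral_neg_part hg]
          exact sub_le_self _ ENNReal.toReal_nonneg
      _ ≤ (∫⁻ a, f a ∂μ).toReal := ENNReal.toReal_mono hf (lintegral_mono_ae hgf)
  · rw [integral_undef hg]
    exact ENNReal.toReal_nonneg

section SubGammaDuality

variable {σ c K D : ℝ}

lemma le_of_forall_mul_le_add_subGamma_of_pos (hσ : 0 < σ) (hc : 0 < c) (hK : 0 < K)
    (h : ∀ lam : ℝ, 0 < lam → lam < 1 / c →
      lam * D ≤ K + lam ^ 2 * σ ^ 2 / (2 * (1 - c * lam))) :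
    D ≤ σ * √(2 * K) + c * K := by
  set r := √(2 * K)
  have hr : 0 < r := Real.sqrt_pos.mpr (by linarith)
  have hr2 : r ^ 2 = 2 * K := Real.sq_sqrt (by linarith)
  have hden : 0 < σ + c * r := by positivity
  have hlam : 0 < r / (σ + c * r) := by positivity
  have hlam_lt : r / (σ + c * r) < 1 / c := by
    rw [div_lt_div_iff₀ hden hc]
    nlinarith
  have hopt : K + (r / (σ + c * r)) ^ 2 * σ ^ 2 / (2 * (1 - c * (r / (σ + c * r)))) =
      r / (σ + c * r) * (σ * r + c * K) := by
    have h1 : 1 - c * (r / (σ + c * r)) = σ / (σ + c * r) := by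
      field_simp
      ring
    rw [h1]
    field_simp
    linear_combination (-σ) * hr2
  have := h _ hlam hlam_lt
  rw [hopt] at this
  exact le_of_mul_le_mul_left this hlam

/-- For `K = 0` no admissible `λ` is optimal, so `K` is approximated from above. -/
lemma le_of_forall_mul_le_add_subGamma (hσ : 0 < σ) (hc : 0 < c) (hK : 0 ≤ K)
    (h : ∀ lam : ℝ, 0 < lam → lam < 1 / c →
      lam * D ≤ K + lam ^ 2 * σ ^ 2 / (2 * (1 - c * lam))) :
    D ≤ σ * √(2 * K) + c * K := by
  set F : ℝ → ℝ := fun ε ↦ σ * √(2 * (K + ε)) + c * (K + ε)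
  have hF : Filter.Tendsto F (nhdsWithin 0 (Set.Ioi 0)) (nhds (F 0)) :=
    ((by fun_prop : Continuous F).tendsto 0).mono_left nhdsWithin_le_nhds
  have hle : ∀ ε > 0, D ≤ F ε := fun ε hε ↦
    le_of_forall_mul_le_add_subGamma_of_pos hσ hc (by linarith) fun lam hlam hlam_lt ↦
      (h lam hlam hlam_lt).trans (by linarith)
  simpa [F] using ge_of_tendsto hF (eventually_nhdsWithin_of_forall hle)

end SubGammaDuality

theorem expected_risk_discrepancy_le_of_subGamma_general {S Ω : Type*}
    [MeasurableSpace S] [MeasurableSpace Ω]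
    (μ : Measure S) [IsProbabilityMeasure μ] (p : Measure Ω) [IsProbabilityMeasure p]
    (κ : Kernel S Ω) [IsMarkovKernel κ] (σ c : ℝ) (l : Ω → ℝ)
    (hsg : IsSubGamma p σ c l)
    (hlint : ∀ᵐ s ∂μ, Integrable l (κ s))
    (hklfin : ∫⁻ s, klDiv (κ s) p ∂μ ≠ ⊤)
    (hmean : Integrable (fun s => ∫ x, l x ∂(κ s)) μ) :
    ∫ s, (∫ x, l x ∂(κ s) - ∫ x, l x ∂p) ∂μ ≤
      σ * Real.sqrt (2 * (∫⁻ s, klDiv (κ s) p ∂μ).toReal) +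
        c * (∫⁻ s, klDiv (κ s) p ∂μ).toReal := by
  obtain ⟨hσ, hc, -, hmgf⟩ := hsg
  set m := ∫ x, l x ∂p
  refine le_of_forall_mul_le_add_subGamma hσ hc ENNReal.toReal_nonneg fun lam hlam hlam_lt ↦ ?_
  obtain ⟨hexp, hlog⟩ := hmgf lam hlam hlam_lt
  set L := log (∫ x, exp (lam * (l x - m)) ∂p)
  have hdv : ∀ᵐ s ∂μ,
      ENNReal.ofReal (lam * (∫ x, l x ∂(κ s) - m) - L) ≤ klDiv (κ s) p := by
    filter_upwards [hlint] with s hs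
    have hf : Integrable (fun x ↦ lam * (l x - m)) (κ s) :=
      (hs.sub (integrable_const m)).const_mul lam
    have := ofReal_integral_sub_log_integral_exp_le_klDiv hf hexp
    rwa [integral_const_mul, integral_sub hs (integrable_const m), integral_const,
      probReal_univ, one_smul] at this
  have hint := integral_le_toReal_lintegral hklfin hdv
  have hg : Integrable (fun s ↦ lam * (∫ x, l x ∂(κ s) - m)) μ :=
    (hmean.sub (integrable_const m)).const_mul lam
  rw [integral_sub hg (integrable_const L), integral_const_mul, integral_const, probReal_univ,
    one_smul] at hint
  linarith

/-- **Sub-Gamma upper bound on the expected wireless risk discrepancy.** Let `μ` be a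
probability measure on the side-information space `S`, `p` a probability measure on `Ω`,
and `s ↦ κ s` a Markov kernel from `S` to `Ω`.  If the loss `l : Ω → ℝ` is
`(σ,c)`-sub-Gamma under `p`, is `κ s`-integrable for `μ`-a.e. `s`, each `κ s ≪ p`,
`s ↦ KL(κ s‖p)` is `μ`-integrable (finite integral), and `s ↦ E_{κ s}[l]` is
`μ`-integrable, then
`∫ (E_{κ s}[l] − E_p[l]) dμ(s) ≤ σ √(2 ∫ KL(κ s‖p) dμ(s)) + c ∫ KL(κ s‖p) dμ(s)`. -/
theorem expected_risk_discrepancy_le_of_subGamma {S Ω : Type*}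
    [MeasurableSpace S] [MeasurableSpace Ω]
    (μ : Measure S) [IsProbabilityMeasure μ] (p : Measure Ω) [IsProbabilityMeasure p]
    (κ : Kernel S Ω) [IsMarkovKernel κ] (σ c : ℝ) (l : Ω → ℝ)
    (hsg : IsSubGamma p σ c l)
    (hlint : ∀ᵐ s ∂μ, Integrable l (κ s))
    (hac : ∀ s, κ s ≪ p)
    (hklfin : ∫⁻ s, klDiv (κ s) p ∂μ ≠ ⊤)
    (hmean : Integrable (fun s => ∫ x, l x ∂(κ s)) μ) :
    ∫ s, (∫ x, l x ∂(κ s) - ∫ x, l x ∂p) ∂μ ≤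
      σ * Real.sqrt (2 * (∫⁻ s, klDiv (κ s) p ∂μ).toReal) +
        c * (∫⁻ s, klDiv (κ s) p ∂μ).toReal :=
  expected_risk_discrepancy_le_of_subGamma_general μ p κ σ c l hsg hlint hklfin hmean
end
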